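/- Let m ≥ 2 be an integer and ω > 0. Define g : ℝ → ℝ by g(x) = ((−1)^m / (4 ω^{2m−1})) · ( (2m−3)·sin(ωx) − ωx·cos(ωx) + 2·∑_{k=1}^{m−2} (−1)^k (m−k−1) (ωx)^{2k−1} / (2k−1)! ) (the sum is empty when m = 2). Then g^{(j)}(0) = 0 for every integer j with 0 ≤ j ≤ 2m−2, and g^{(2m−1)}(0) = 1/2. -/

import Mathlib

open Real Finset

/-- The smooth factor of the fundamental solution `G_m(x) = sign(x) · g(x)`. -/
noncomputable def gFactor (m : ℕ) (ω : ℝ) (x : ℝ) : ℝ :=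
  (-1 : ℝ) ^ m / (4 * ω ^ (2 * m - 1)) *
    ((2 * (m : ℝ) - 3) * Real.sin (ω * x) - ω * x * Real.cos (ω * x)
      + 2 * ∑ k ∈ Finset.Icc 1 (m - 2),
          (-1 : ℝ) ^ k * ((m : ℝ) - (k : ℝ) - 1) * (ω * x) ^ (2 * k - 1)
            / (Nat.factorial (2 * k - 1)))

private lemma itd_diff {f : ℝ → ℝ} (hf : ContDiff ℝ (⊤ : ℕ∞) f) (n : ℕ) :
    Differentiable ℝ (iteratedDeriv n f) :=
  hf.differentiable_iteratedDeriv n (by exact_mod_cast ENat.coe_lt_top n)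

private lemma itd_add {f g : ℝ → ℝ} (hf : ContDiff ℝ (⊤ : ℕ∞) f) (hg : ContDiff ℝ (⊤ : ℕ∞) g)
    (n : ℕ) (x : ℝ) :
    iteratedDeriv n (fun y => f y + g y) x = iteratedDeriv n f x + iteratedDeriv n g x := by
  simp only [← iteratedDerivWithin_univ]
  exact iteratedDerivWithin_add (Set.mem_univ x) uniqueDiffOn_univ
    (hf.of_le (by exact_mod_cast le_top)).contDiffWithinAt (hg.of_le (by exact_mod_cast le_top)).contDiffWithinAt

private lemma itd_const_mul {f : ℝ → ℝ} (hf : ContDiff ℝ (⊤ : ℕ∞) f) (c : ℝ) (n : ℕ) (x : ℝ) :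
    iteratedDeriv n (fun y => c * f y) x = c * iteratedDeriv n f x := by
  simp only [← iteratedDerivWithin_univ]
  exact iteratedDerivWithin_const_mul (Set.mem_univ x) uniqueDiffOn_univ c
    (hf.of_le (by exact_mod_cast le_top)).contDiffWithinAt

private lemma itd_sum {ι : Type*} (s : Finset ι) (f : ι → ℝ → ℝ)
    (hf : ∀ i ∈ s, ContDiff ℝ (⊤ : ℕ∞) (f i)) (n : ℕ) (x : ℝ) :
    iteratedDeriv n (fun y => ∑ i ∈ s, f i y) x = ∑ i ∈ s, iteratedDeriv n (f i) x := by
  induction s using Finset.cons_induction with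
  | empty =>
    have : (fun _ : ℝ => (0 : ℝ)) = fun y : ℝ => (0 : ℝ) * (1 : ℝ) := by funext y; ring
    simp only [Finset.sum_empty]
    rw [this, itd_const_mul contDiff_const 0 n x]
    simp
  | cons a s ha ih =>
    simp only [Finset.sum_cons]
    have h1 : ContDiff ℝ (⊤ : ℕ∞) (f a) := hf a (Finset.mem_cons_self a s)
    have h2 : ∀ i ∈ s, ContDiff ℝ (⊤ : ℕ∞) (f i) := fun i hi => hf i (Finset.mem_cons_of_mem hi)
    have h2' : ContDiff ℝ (⊤ : ℕ∞) (fun y => ∑ i ∈ s, f i y) := ContDiff.sum h2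
    calc iteratedDeriv n (fun y => f a y + ∑ i ∈ s, f i y) x
        = iteratedDeriv n (f a) x + iteratedDeriv n (fun y => ∑ i ∈ s, f i y) x :=
          itd_add h1 h2' n x
      _ = _ := by rw [ih h2]

/-- Iterated derivatives of sin and cos. -/
private lemma itd_sin_cos (k : ℕ) :
    iteratedDeriv (2 * k) Real.sin = (fun x => (-1 : ℝ) ^ k * Real.sin x) ∧
    iteratedDeriv (2 * k + 1) Real.sin = (fun x => (-1 : ℝ) ^ k * Real.cos x) ∧
    iteratedDeriv (2 * k) Real.cos = (fun x => (-1 : ℝ) ^ k * Real.cos x) ∧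
    iteratedDeriv (2 * k + 1) Real.cos = (fun x => -((-1 : ℝ) ^ k * Real.sin x)) := by
  induction k with
  | zero =>
    refine ⟨?_, ?_, ?_, ?_⟩ <;> funext x <;>
      simp [iteratedDeriv_succ, iteratedDeriv_zero, Real.deriv_sin, Real.deriv_cos]
  | succ k ih =>
    obtain ⟨h1, h2, h3, h4⟩ := ih
    have e1 : 2 * (k + 1) = (2 * k + 1) + 1 := by ring
    have hs : iteratedDeriv (2 * (k + 1)) Real.sin = fun x => (-1 : ℝ) ^ (k + 1) * Real.sin x := by
      rw [e1, iteratedDeriv_succ, h2]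
      funext x
      rw [deriv_const_mul_field, Real.deriv_cos]
      ring
    have hc : iteratedDeriv (2 * (k + 1)) Real.cos = fun x => (-1 : ℝ) ^ (k + 1) * Real.cos x := by
      rw [e1, iteratedDeriv_succ, h4]
      funext x
      have : deriv (fun x => -((-1 : ℝ) ^ k * Real.sin x)) x
          = -((-1 : ℝ) ^ k * Real.cos x) := by
        rw [deriv.fun_neg, deriv_const_mul_field, Real.deriv_sin]
      rw [this]; ring
    refine ⟨hs, ?_, hc, ?_⟩
    · rw [iteratedDeriv_succ, hs]
      funext x
      rw [deriv_const_mul_field, Real.deriv_sin]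
    · rw [iteratedDeriv_succ, hc]
      funext x
      rw [deriv_const_mul_field, Real.deriv_cos]
      ring

/-- Iterated derivative of `x * f x`. -/
private lemma itd_id_mul {f : ℝ → ℝ} (hf : ContDiff ℝ (⊤ : ℕ∞) f) : ∀ n : ℕ,
    iteratedDeriv n (fun x => x * f x) =
      fun x => x * iteratedDeriv n f x + (n : ℝ) * iteratedDeriv (n - 1) f x := by
  intro n
  induction n with
  | zero => funext x; simp
  | succ n ih =>
    funext x
    rw [iteratedDeriv_succ, ih]
    have hdn : DifferentiableAt ℝ (iteratedDeriv n f) x := (itd_diff hf n).differentiableAt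
    have hdn1 : DifferentiableAt ℝ (iteratedDeriv (n - 1) f) x :=
      (itd_diff hf (n - 1)).differentiableAt
    have h1 : HasDerivAt (fun y : ℝ => y * iteratedDeriv n f y)
        (1 * iteratedDeriv n f x + x * deriv (iteratedDeriv n f) x) x :=
      (hasDerivAt_id x).mul hdn.hasDerivAt
    have h2 : HasDerivAt (fun y : ℝ => (n : ℝ) * iteratedDeriv (n - 1) f y)
        ((n : ℝ) * deriv (iteratedDeriv (n - 1) f) x) x :=
      hdn1.hasDerivAt.const_mul (n : ℝ)
    have := (h1.fun_add h2).deriv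
    rw [this]
    have e1 : deriv (iteratedDeriv n f) x = iteratedDeriv (n + 1) f x :=
      (congrFun (iteratedDeriv_succ (n := n) (f := f)) x).symm
    have e2 : (n : ℝ) * deriv (iteratedDeriv (n - 1) f) x = (n : ℝ) * iteratedDeriv n f x := by
      cases n with
      | zero => simp
      | succ p =>
        have : p + 1 - 1 = p := rfl
        rw [this, ← iteratedDeriv_succ]
    rw [e1, e2]
    simp only [Nat.add_sub_cancel]
    push_cast
    ring

/-- Iterated derivative of powers. -/
private lemma itd_pow (p : ℕ) : ∀ n : ℕ,
    iteratedDeriv n (fun x : ℝ => x ^ p) =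
      fun x => (p.descFactorial n : ℝ) * x ^ (p - n) := by
  intro n
  induction n with
  | zero => funext x; simp
  | succ n ih =>
    funext x
    rw [iteratedDeriv_succ, ih]
    rw [deriv_const_mul_field]
    rw [deriv_pow_field]
    have : p.descFactorial (n + 1) = (p - n) * p.descFactorial n := Nat.descFactorial_succ p n
    rw [this]
    have : p - (n + 1) = p - n - 1 := by omega
    rw [this]
    push_cast
    ring

private lemma itd_pow_zero (p n : ℕ) (hp : 0 < p) :
    iteratedDeriv n (fun x : ℝ => x ^ p) 0 = if n = p then (p.factorial : ℝ) else 0 := by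
  rw [itd_pow p n]
  show (p.descFactorial n : ℝ) * (0 : ℝ) ^ (p - n) = _
  by_cases h : n = p
  · subst h
    simp [Nat.descFactorial_self]
  · rcases lt_or_gt_of_ne h with h' | h'
    · rw [if_neg h, zero_pow (by omega : p - n ≠ 0), mul_zero]
    · rw [if_neg h, Nat.descFactorial_eq_zero_iff_lt.2 h']
      simp

private lemma itd_sin_omega (ω : ℝ) (n : ℕ) :
    iteratedDeriv n (fun x => Real.sin (ω * x)) 0 = ω ^ n * iteratedDeriv n Real.sin 0 := by
  have := iteratedDeriv_comp_const_mul (Real.contDiff_sin.of_le le_top) ω (n := n)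
  have h := congrFun this 0
  simpa using h

private lemma itd_cos_omega (ω : ℝ) (n : ℕ) :
    iteratedDeriv n (fun x => Real.cos (ω * x)) 0 = ω ^ n * iteratedDeriv n Real.cos 0 := by
  have := iteratedDeriv_comp_const_mul (Real.contDiff_cos.of_le le_top) ω (n := n)
  have h := congrFun this 0
  simpa using h

private lemma itd_sin_omega_even (ω : ℝ) (t : ℕ) :
    iteratedDeriv (2 * t) (fun x => Real.sin (ω * x)) 0 = 0 := by
  rw [itd_sin_omega, (itd_sin_cos t).1]
  simp

private lemma itd_sin_omega_odd (ω : ℝ) (t : ℕ) :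
    iteratedDeriv (2 * t + 1) (fun x => Real.sin (ω * x)) 0 = (-1 : ℝ) ^ t * ω ^ (2 * t + 1) := by
  rw [itd_sin_omega, (itd_sin_cos t).2.1]
  simp only [Real.cos_zero, mul_one]
  ring

private lemma itd_cos_omega_even (ω : ℝ) (t : ℕ) :
    iteratedDeriv (2 * t) (fun x => Real.cos (ω * x)) 0 = (-1 : ℝ) ^ t * ω ^ (2 * t) := by
  rw [itd_cos_omega, (itd_sin_cos t).2.2.1]
  simp only [Real.cos_zero, mul_one]
  ring

private lemma itd_cos_omega_odd (ω : ℝ) (t : ℕ) :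
    iteratedDeriv (2 * t + 1) (fun x => Real.cos (ω * x)) 0 = 0 := by
  rw [itd_cos_omega, (itd_sin_cos t).2.2.2]
  simp

private lemma contDiff_cos_omega (ω : ℝ) : ContDiff ℝ (⊤ : ℕ∞) (fun x : ℝ => Real.cos (ω * x)) :=
  Real.contDiff_cos.comp (contDiff_const.mul contDiff_id)

private lemma itd_xcos_even (ω : ℝ) (t : ℕ) :
    iteratedDeriv (2 * t) (fun x => x * Real.cos (ω * x)) 0 = 0 := by
  rw [congrFun (itd_id_mul (contDiff_cos_omega ω) (2 * t)) 0]
  cases t with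
  | zero => simp
  | succ s =>
    have h1 : 2 * (s + 1) - 1 = 2 * s + 1 := by omega
    rw [h1, itd_cos_omega_odd]
    simp

private lemma itd_xcos_odd (ω : ℝ) (t : ℕ) :
    iteratedDeriv (2 * t + 1) (fun x => x * Real.cos (ω * x)) 0 =
      (2 * (t : ℝ) + 1) * ((-1 : ℝ) ^ t * ω ^ (2 * t)) := by
  rw [congrFun (itd_id_mul (contDiff_cos_omega ω) (2 * t + 1)) 0]
  have h1 : 2 * t + 1 - 1 = 2 * t := rfl
  rw [h1, itd_cos_omega_even]
  push_cast
  ring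

/-- The jump conditions at `0`: `g^{(j)}(0) = 0` for `0 ≤ j ≤ 2m - 2`
and `g^{(2m-1)}(0) = 1/2`. -/
theorem gFactor_derivs_at_zero (m : ℕ) (hm : 2 ≤ m) (ω : ℝ) (hω : 0 < ω) :
    (∀ j : ℕ, j ≤ 2 * m - 2 → iteratedDeriv j (gFactor m ω) 0 = 0) ∧
      iteratedDeriv (2 * m - 1) (gFactor m ω) 0 = 1 / 2 := by
  classical
  set C : ℝ := (-1 : ℝ) ^ m / (4 * ω ^ (2 * m - 1)) with hC
  set e : ℕ → ℝ := fun k =>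
    2 * ((-1 : ℝ) ^ k * ((m : ℝ) - (k : ℝ) - 1) * ω ^ (2 * k - 1) /
      ((2 * k - 1).factorial : ℝ)) with he
  -- rewrite gFactor as an explicit linear combination
  have hgf : gFactor m ω = fun x =>
      C * ((2 * (m : ℝ) - 3) * Real.sin (ω * x) +
        ((-ω) * (x * Real.cos (ω * x)) +
          ∑ k ∈ Finset.Icc 1 (m - 2), e k * x ^ (2 * k - 1))) := by
    funext x
    rw [gFactor]
    have hsum : ∑ k ∈ Finset.Icc 1 (m - 2),
        (-1 : ℝ) ^ k * ((m : ℝ) - (k : ℝ) - 1) * (ω * x) ^ (2 * k - 1)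
          / (Nat.factorial (2 * k - 1)) =
        ∑ k ∈ Finset.Icc 1 (m - 2),
          ((-1 : ℝ) ^ k * ((m : ℝ) - (k : ℝ) - 1) * ω ^ (2 * k - 1) /
            ((2 * k - 1).factorial : ℝ)) * x ^ (2 * k - 1) := by
      refine Finset.sum_congr rfl fun k _ => ?_
      rw [mul_pow]
      ring
    rw [hsum, Finset.mul_sum]
    have hsum2 : ∑ k ∈ Finset.Icc 1 (m - 2),
        2 * ((-1 : ℝ) ^ k * ((m : ℝ) - (k : ℝ) - 1) * ω ^ (2 * k - 1) /
          ((2 * k - 1).factorial : ℝ) * x ^ (2 * k - 1)) =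
        ∑ k ∈ Finset.Icc 1 (m - 2), e k * x ^ (2 * k - 1) := by
      refine Finset.sum_congr rfl fun k _ => ?_
      simp only [he]
      ring
    rw [hsum2, hC]
    ring
  -- smoothness facts
  have cS : ContDiff ℝ (⊤ : ℕ∞) (fun x : ℝ => Real.sin (ω * x)) :=
    Real.contDiff_sin.comp (contDiff_const.mul contDiff_id)
  have cS' : ContDiff ℝ (⊤ : ℕ∞) (fun x : ℝ => (2 * (m : ℝ) - 3) * Real.sin (ω * x)) :=
    contDiff_const.mul cS
  have cX : ContDiff ℝ (⊤ : ℕ∞) (fun x : ℝ => x * Real.cos (ω * x)) :=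
    contDiff_id.mul (contDiff_cos_omega ω)
  have cX' : ContDiff ℝ (⊤ : ℕ∞) (fun x : ℝ => (-ω) * (x * Real.cos (ω * x))) :=
    contDiff_const.mul cX
  have cP : ∀ k : ℕ, ContDiff ℝ (⊤ : ℕ∞) (fun x : ℝ => e k * x ^ (2 * k - 1)) :=
    fun k => contDiff_const.mul (contDiff_id.pow _)
  have cSum : ContDiff ℝ (⊤ : ℕ∞) (fun x : ℝ => ∑ k ∈ Finset.Icc 1 (m - 2), e k * x ^ (2 * k - 1)) :=
    ContDiff.sum fun k _ => cP k
  have cRest : ContDiff ℝ (⊤ : ℕ∞) (fun x : ℝ => (-ω) * (x * Real.cos (ω * x)) +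
      ∑ k ∈ Finset.Icc 1 (m - 2), e k * x ^ (2 * k - 1)) := cX'.add cSum
  have cF : ContDiff ℝ (⊤ : ℕ∞) (fun x : ℝ => (2 * (m : ℝ) - 3) * Real.sin (ω * x) +
      ((-ω) * (x * Real.cos (ω * x)) +
        ∑ k ∈ Finset.Icc 1 (m - 2), e k * x ^ (2 * k - 1))) := cS'.add cRest
  -- the key formula for arbitrary j
  have key : ∀ j : ℕ, iteratedDeriv j (gFactor m ω) 0 =
      C * ((2 * (m : ℝ) - 3) * iteratedDeriv j (fun x => Real.sin (ω * x)) 0 +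
        ((-ω) * iteratedDeriv j (fun x => x * Real.cos (ω * x)) 0 +
          ∑ k ∈ Finset.Icc 1 (m - 2),
            e k * iteratedDeriv j (fun x : ℝ => x ^ (2 * k - 1)) 0)) := by
    intro j
    rw [hgf]
    rw [itd_const_mul cF C j 0]
    rw [itd_add cS' cRest j 0]
    rw [itd_const_mul cS ((2 : ℝ) * (m : ℝ) - 3) j 0]
    rw [itd_add cX' cSum j 0]
    rw [itd_const_mul cX (-ω) j 0]
    rw [itd_sum (Finset.Icc 1 (m - 2)) (fun k x => e k * x ^ (2 * k - 1)) (fun k _ => cP k) j 0]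
    congr 1
    congr 1
    congr 1
    refine Finset.sum_congr rfl fun k _ => ?_
    exact itd_const_mul (contDiff_id.pow _) (e k) j 0
  -- value of the monomial derivatives
  have hmono : ∀ j k : ℕ, 1 ≤ k →
      iteratedDeriv j (fun x : ℝ => x ^ (2 * k - 1)) 0 =
        if j = 2 * k - 1 then (((2 * k - 1).factorial : ℕ) : ℝ) else 0 :=
    fun j k hk => itd_pow_zero (2 * k - 1) j (by omega)
  -- even case: all derivatives vanish
  have even_case : ∀ t : ℕ, iteratedDeriv (2 * t) (gFactor m ω) 0 = 0 := by
    intro t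
    rw [key (2 * t), itd_sin_omega_even, itd_xcos_even]
    have hs : ∑ k ∈ Finset.Icc 1 (m - 2),
        e k * iteratedDeriv (2 * t) (fun x : ℝ => x ^ (2 * k - 1)) 0 = 0 := by
      refine Finset.sum_eq_zero fun k hk => ?_
      have hk1 : 1 ≤ k := (Finset.mem_Icc.mp hk).1
      rw [hmono (2 * t) k hk1, if_neg (by omega), mul_zero]
    rw [hs]
    ring
  -- odd case: explicit value
  have odd_case : ∀ t : ℕ, iteratedDeriv (2 * t + 1) (gFactor m ω) 0 =
      C * ((-1 : ℝ) ^ t * ω ^ (2 * t + 1)) *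
        ((2 * (m : ℝ) - 3) - (2 * (t : ℝ) + 1) -
          (if t + 1 ∈ Finset.Icc 1 (m - 2) then 2 * ((m : ℝ) - (t : ℝ) - 2) else 0)) := by
    intro t
    rw [key (2 * t + 1), itd_sin_omega_odd, itd_xcos_odd]
    have hs : ∑ k ∈ Finset.Icc 1 (m - 2),
        e k * iteratedDeriv (2 * t + 1) (fun x : ℝ => x ^ (2 * k - 1)) 0 =
        if t + 1 ∈ Finset.Icc 1 (m - 2) then
          e (t + 1) * (((2 * (t + 1) - 1).factorial : ℕ) : ℝ) else 0 := by
      have hterm : ∀ k ∈ Finset.Icc 1 (m - 2),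
          e k * iteratedDeriv (2 * t + 1) (fun x : ℝ => x ^ (2 * k - 1)) 0 =
          if k = t + 1 then e k * (((2 * k - 1).factorial : ℕ) : ℝ) else 0 := by
        intro k hk
        have hk1 : 1 ≤ k := (Finset.mem_Icc.mp hk).1
        rw [hmono (2 * t + 1) k hk1]
        by_cases h : k = t + 1
        · rw [if_pos h, if_pos (by omega)]
        · rw [if_neg h, if_neg (by omega), mul_zero]
      rw [Finset.sum_congr rfl hterm]
      exact Finset.sum_ite_eq' (Finset.Icc 1 (m - 2)) (t + 1)
        (fun k => e k * (((2 * k - 1).factorial : ℕ) : ℝ))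
    rw [hs]
    have hfac : (2 * (t + 1) - 1) = 2 * t + 1 := by omega
    have hfac_pos : (0 : ℝ) < (((2 * t + 1).factorial : ℕ) : ℝ) := by
      exact_mod_cast Nat.factorial_pos (2 * t + 1)
    by_cases hmem : t + 1 ∈ Finset.Icc 1 (m - 2)
    · rw [if_pos hmem, if_pos hmem]
      simp only [he, hfac]
      have hcast : ((t + 1 : ℕ) : ℝ) = (t : ℝ) + 1 := by push_cast; ring
      rw [hcast]
      have hp : (-1 : ℝ) ^ (t + 1) = (-1 : ℝ) ^ t * (-1) := pow_succ (-1 : ℝ) t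
      rw [hp]
      field_simp
      ring
    · rw [if_neg hmem, if_neg hmem]
      ring
  constructor
  · intro j hj
    rcases Nat.even_or_odd j with ⟨t, ht⟩ | ⟨t, ht⟩
    · have : j = 2 * t := by omega
      rw [this]; exact even_case t
    · have hjt : j = 2 * t + 1 := by omega
      rw [hjt, odd_case t]
      have ht' : t ≤ m - 2 := by omega
      by_cases h3 : t + 1 ≤ m - 2
      · rw [if_pos (Finset.mem_Icc.mpr ⟨by omega, h3⟩)]
        have hm' : (2 * (m : ℝ) - 3) - (2 * (t : ℝ) + 1) - 2 * ((m : ℝ) - (t : ℝ) - 2) = 0 := by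
          ring
        rw [hm']
        ring
      · -- t = m - 2
        have htm : t = m - 2 := by omega
        rw [if_neg (by rw [Finset.mem_Icc]; omega)]
        have hcast : (t : ℝ) = (m : ℝ) - 2 := by
          rw [htm]
          have : ((m - 2 : ℕ) : ℝ) = (m : ℝ) - 2 := by
            push_cast [Nat.cast_sub hm]
            ring
          rw [this]
        rw [hcast]
        have : (2 * (m : ℝ) - 3) - (2 * ((m : ℝ) - 2) + 1) - 0 = 0 := by ring
        rw [this]
        ring
  · have h2m : 2 * m - 1 = 2 * (m - 1) + 1 := by omega
    rw [h2m, odd_case (m - 1)]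
    rw [if_neg (by rw [Finset.mem_Icc]; omega)]
    have hcast : ((m - 1 : ℕ) : ℝ) = (m : ℝ) - 1 := by
      push_cast [Nat.cast_sub (by omega : 1 ≤ m)]
      ring
    rw [hcast]
    have hb : (2 * (m : ℝ) - 3) - (2 * ((m : ℝ) - 1) + 1) - 0 = -2 := by ring
    rw [hb]
    have hexp : 2 * (m - 1) + 1 = 2 * m - 1 := by omega
    rw [hexp]
    rw [hC]
    have hsign : (-1 : ℝ) ^ m * (-1 : ℝ) ^ (m - 1) = -1 := by
      rw [← pow_add]
      have : m + (m - 1) = 2 * (m - 1) + 1 := by omega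
      rw [this, pow_succ]
      have : ((-1 : ℝ) ^ (2 * (m - 1))) = 1 := by
        rw [pow_mul]
        norm_num
      rw [this]; ring
    have hωne : ω ^ (2 * m - 1) ≠ 0 := pow_ne_zero _ hω.ne'
    have hq : ω ^ (2 * m - 1) / (4 * ω ^ (2 * m - 1)) = 1 / 4 := by
      rw [div_eq_div_iff (by positivity) (by norm_num : (4:ℝ) ≠ 0)]
      ring
    have hmain : (-1 : ℝ) ^ m / (4 * ω ^ (2 * m - 1)) * ((-1 : ℝ) ^ (m - 1) * ω ^ (2 * m - 1)) * (-2)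
        = ((-1 : ℝ) ^ m * (-1 : ℝ) ^ (m - 1)) * (-2) * (ω ^ (2 * m - 1) / (4 * ω ^ (2 * m - 1))) := by
      ring
    rw [hmain, hsign, hq]
    norm_num
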